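/- arXiv:2110.12395 — 8 statements merged into one kernel-verified Lean document; each statement's English description precedes it below -/
import Mathlib

section
/- If every element m of a monoid M has only finitely many prefixes (i.e., for every m ∈ M, the set of elements p ∈ M such that m = p·p' for some p' ∈ M is finite), then M is pre-rational. -/
/-- A monoid `M` is *pre-rational* if for every finite alphabet `A`, every monoid
homomorphism `μ` from the free monoid `A*` to `M`, and every `m ∈ M`, the language
`μ⁻¹(m) ⊆ A*` is regular. -/
def IsPreRational (M : Type*) [Monoid M] : Prop :=
  ∀ (A : Type) (_ : Fintype A) (μ : FreeMonoid A →* M) (m : M),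
    Language.IsRegular {w : List A | μ (FreeMonoid.ofList w) = m}

/-- If every element `m` of a monoid `M` has only finitely many prefixes (elements `p`
such that `m = p * p'` for some `p'`), then `M` is pre-rational. -/
theorem finite_prefixes_isPreRational (M : Type*) [Monoid M]
    (h : ∀ m : M, {p : M | ∃ p' : M, m = p * p'}.Finite) :
    IsPreRational M := by
  intro A _ μ m
  classical
  set S : Set M := {p : M | ∃ p' : M, m = p * p'} with hSdef
  haveI : Fintype S := (h m).fintype
  have hone : (1 : M) ∈ S := ⟨m, (one_mul m).symm⟩
  have hm : m ∈ S := ⟨1, (mul_one m).symm⟩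
  let D : DFA A (Option S) :=
    { step := fun s a => s.bind fun p =>
        if hp : (p : M) * μ (FreeMonoid.of a) ∈ S then some ⟨_, hp⟩ else none
      start := some ⟨1, hone⟩
      accept := {some ⟨m, hm⟩} }
  have keyA : ∀ (w : List A) (p : S), D.eval w = some p →
      μ (FreeMonoid.ofList w) = (p : M) := by
    intro w
    induction w using List.reverseRecOn with
    | nil =>
      intro p hp
      have : (⟨1, hone⟩ : S) = p := Option.some.inj hp
      simp [← this]
    | append_singleton w a ih =>
      intro p hp
      rw [DFA.eval_append_singleton] at hp
      rcases hq : D.eval w with _ | q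
      · rw [hq] at hp; simp [D] at hp
      · rw [hq] at hp
        simp only [D, Option.bind_some] at hp
        split_ifs at hp with hS
        have := Option.some.inj hp
        rw [FreeMonoid.ofList_append, map_mul, ih q hq, ← this]
        rfl
  have keyB : ∀ (w : List A) (hw : μ (FreeMonoid.ofList w) ∈ S),
      D.eval w = some ⟨μ (FreeMonoid.ofList w), hw⟩ := by
    intro w
    induction w using List.reverseRecOn with
    | nil => intro hw; simp [D, DFA.eval]
    | append_singleton w a ih =>
      intro hw
      have hsplit : μ (FreeMonoid.ofList (w ++ [a]))
          = μ (FreeMonoid.ofList w) * μ (FreeMonoid.of a) := by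
        rw [FreeMonoid.ofList_append, map_mul]; rfl
      have hwS : μ (FreeMonoid.ofList w) ∈ S := by
        rw [hsplit] at hw
        obtain ⟨p', hp'⟩ := hw
        exact ⟨μ (FreeMonoid.of a) * p', by rw [hp', mul_assoc]⟩
      rw [DFA.eval_append_singleton, ih hwS]
      simp only [D, Option.bind_some]
      rw [dif_pos (hsplit ▸ hw)]
      exact congrArg some (Subtype.ext hsplit.symm)
  let g : Option S ≃ Fin (Fintype.card (Option S)) := Fintype.equivFin _
  refine ⟨Fin (Fintype.card (Option S)), inferInstance, DFA.reindex g D, ?_⟩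
  rw [DFA.accepts_reindex]
  ext w
  rw [DFA.mem_accepts]
  constructor
  · intro hw
    have : D.eval w = some ⟨m, hm⟩ := hw
    exact keyA w ⟨m, hm⟩ this
  · intro hw
    have hwS : μ (FreeMonoid.ofList w) ∈ S := hw ▸ hm
    have := keyB w hwS
    show D.eval w ∈ ({some ⟨m, hm⟩} : Set (Option S))
    rw [this]
    exact congrArg some (Subtype.ext hw)
end

section
/- Every finitely generated graded monoid is pre-rational. That is, if M is a monoid generated by a finite set and there exists a gradation φ : M → ℕ satisfying φ(mn) = φ(m) + φ(n) for all m, n ∈ M and φ(m) = 0 only if m is the neutral element of M, then M is pre-rational. -/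
theorem Language.isRegular_preimage_of_finite_leftDivisors {M A : Type*} [Monoid M]
    (μ : FreeMonoid A →* M) (m : M) (h : {x : M | ∃ y, x * y = m}.Finite) :
    Language.IsRegular {w : List A | μ (FreeMonoid.ofList w) = m} := by
  set L : Language A := {w : List A | μ (FreeMonoid.ofList w) = m}
  let quotientBy : M → Language A := fun x => {v | x * μ (FreeMonoid.ofList v) = m}
  have hquot : ∀ u, L.leftQuotient u = quotientBy (μ (FreeMonoid.ofList u)) := fun u => by
    ext v
    change μ (FreeMonoid.ofList (u ++ v)) = m ↔ _
    rw [FreeMonoid.ofList_append, map_mul]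
    rfl
  refine .of_finite_range_leftQuotient (((h.image quotientBy).insert 0).subset ?_)
  rintro _ ⟨u, rfl⟩
  rw [hquot]
  by_cases hu : ∃ y, μ (FreeMonoid.ofList u) * y = m
  · exact Or.inr ⟨_, hu, rfl⟩
  · exact Or.inl <| Language.ext fun v =>
      iff_of_false (fun hv => hu ⟨_, hv⟩) (Language.notMem_zero v)

section Graded

variable {M : Type*} [Monoid M] (φ : M → ℕ) (hmul : ∀ m n : M, φ (m * n) = φ m + φ n)
include hmul

theorem exists_list_of_mem_closure_length_le (hzero : ∀ m : M, φ m = 0 → m = 1)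
    {T : Set M} {x : M} (hx : x ∈ Submonoid.closure T) :
    ∃ l : List T, (l.map (↑)).prod = x ∧ l.length ≤ φ x := by
  induction hx using Submonoid.closure_induction with
  | mem t ht =>
    by_cases h1 : t = 1
    · exact ⟨[], by simp [h1], by simp⟩
    · exact ⟨[⟨t, ht⟩], by simp, by simpa [Nat.one_le_iff_ne_zero] using mt (hzero t) h1⟩
  | one => exact ⟨[], by simp, by simp⟩
  | mul x y _ _ hx hy =>
    obtain ⟨l₁, rfl, hl₁⟩ := hx
    obtain ⟨l₂, rfl, hl₂⟩ := hy
    refine ⟨l₁ ++ l₂, by simp, ?_⟩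
    rw [List.length_append, hmul]
    omega

theorem finite_setOf_grade_le [Monoid.FG M] (hzero : ∀ m : M, φ m = 0 → m = 1) (k : ℕ) :
    {x : M | φ x ≤ k}.Finite := by
  obtain ⟨T, hT⟩ := Monoid.FG.fg_top (M := M)
  refine ((List.finite_length_le (T : Set M) k).image fun l => (l.map (↑)).prod).subset ?_
  intro x hx
  obtain ⟨l, hl, hlen⟩ :=
    exists_list_of_mem_closure_length_le φ hmul hzero (hT ▸ Submonoid.mem_top x : x ∈ _)
  exact ⟨l, hlen.trans hx, hl⟩

theorem grade_le_of_mul_eq {x y m : M} (h : x * y = m) : φ x ≤ φ m := by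
  rw [← h, hmul]
  exact Nat.le_add_right _ _

end Graded

/-- Every finitely generated graded monoid is pre-rational: if `M` is generated by a
finite set and carries a gradation `φ : M → ℕ` with `φ (m * n) = φ m + φ n` and such that
`φ m = 0` only if `m = 1`, then `M` is pre-rational. -/
theorem fg_graded_isPreRational (M : Type*) [Monoid M] (hfg : Monoid.FG M)
    (φ : M → ℕ) (hmul : ∀ m n : M, φ (m * n) = φ m + φ n)
    (hzero : ∀ m : M, φ m = 0 → m = 1) :
    IsPreRational M := by
  intro A _ μ m
  have hdivisors : {x : M | ∃ y, x * y = m} ⊆ {x : M | φ x ≤ φ m} :=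
    fun _ ⟨_, h⟩ => grade_le_of_mul_eq φ hmul h
  exact Language.isRegular_preimage_of_finite_leftDivisors μ m
    ((finite_setOf_grade_le φ hmul hzero (φ m)).subset hdivisors)
end

section
/- Let M be a monoid generated by a finite family G = {g₁,…,gₙ} of generators, and let φ be the canonical monoid homomorphism from the free monoid G* to M that evaluates a sequence of generators in M. Then M is pre-rational if and only if for every m ∈ M the language φ⁻¹(m) ⊆ G* is regular. -/
/-- Precompose a DFA with a per-letter word substitution. -/
def DFA.substComap {A G σ : Type*} (D : DFA G σ) (w : A → List G) : DFA A σ where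
  step s a := D.evalFrom s (w a)
  start := D.start
  accept := D.accept

theorem DFA.substComap_evalFrom {A G σ : Type*} (D : DFA G σ) (w : A → List G)
    (s : σ) (l : List A) :
    (D.substComap w).evalFrom s l = D.evalFrom s (l.flatMap w) := by
  induction l generalizing s with
  | nil => simp [DFA.evalFrom]
  | cons a l ih =>
      rw [List.flatMap_cons, DFA.evalFrom_of_append, ← ih]
      rfl

/-- Let `M` be a monoid generated by a finite family `g : G → M` of generators and let
`FreeMonoid.lift g` be the canonical morphism from the free monoid `G*` to `M`. Then `M`
is pre-rational if and only if for every `m ∈ M` the language `(lift g)⁻¹(m) ⊆ G*` is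
regular. -/
theorem isPreRational_iff_generators (M : Type*) [Monoid M]
    (G : Type) [Fintype G] (g : G → M)
    (hgen : Submonoid.closure (Set.range g) = ⊤) :
    IsPreRational M ↔
      ∀ m : M,
        Language.IsRegular {w : List G | FreeMonoid.lift g (FreeMonoid.ofList w) = m} := by
  constructor
  · intro h m
    exact h G ‹_› (FreeMonoid.lift g) m
  · intro h A _ μ m
    -- every element of M is a product of generators
    have hsurj : Function.Surjective (FreeMonoid.lift g) := by
      intro x
      have hx : x ∈ MonoidHom.mrange (FreeMonoid.lift g) := by
        rw [FreeMonoid.mrange_lift, hgen]; trivial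
      exact hx
    choose w hw using fun a : A => hsurj (μ (FreeMonoid.of a))
    obtain ⟨σ, _, D, hD⟩ := h m
    refine ⟨σ, ‹_›, D.substComap (fun a => FreeMonoid.toList (w a)), ?_⟩
    ext l
    have key : ∀ l : List A,
        FreeMonoid.lift g (FreeMonoid.ofList (l.flatMap fun a => FreeMonoid.toList (w a)))
          = μ (FreeMonoid.ofList l) := by
      intro l
      induction l with
      | nil => simp
      | cons a l ih =>
          rw [List.flatMap_cons, FreeMonoid.ofList_append, map_mul, ih]
          have : FreeMonoid.ofList (FreeMonoid.toList (w a)) = w a := rfl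
          rw [this, hw a]
          have : FreeMonoid.ofList (a :: l) = FreeMonoid.of a * FreeMonoid.ofList l := rfl
          rw [this, map_mul]
    have hmem : l ∈ (D.substComap fun a => FreeMonoid.toList (w a)).accepts
        ↔ (l.flatMap fun a => FreeMonoid.toList (w a)) ∈ D.accepts := by
      simp only [DFA.mem_accepts, DFA.eval, DFA.substComap_evalFrom]
      rfl
    rw [hD] at hmem
    rw [hmem]
    show FreeMonoid.lift g (FreeMonoid.ofList _) = m ↔ μ (FreeMonoid.ofList l) = m
    rw [key l]
end

section
/- Let A be a finite alphabet. The monoid M = {L ⊆ A* : ε ∈ L} of languages over A containing the empty word, equipped with language concatenation as product and {ε} as neutral element, is pre-rational. -/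
/-- The monoid of languages over `A` containing the empty word, as a submonoid of the
monoid of languages over `A` under concatenation (with neutral element `{ε}`). -/
def epsLang (A : Type) : Submonoid (Language A) where
  carrier := {L : Language A | [] ∈ L}
  one_mem' := Language.nil_mem_one
  mul_mem' := fun h₁ h₂ => Language.mem_mul.mpr ⟨[], h₁, [], h₂, rfl⟩

/-! Every language in `epsLang A` contains `ε`, so `μ` is monotone for the scattered-subword order
on `B*`: inserting a letter `a` turns `μ x * μ y` into `μ x * μ a * μ y ⊇ μ x * μ y`. Hence
`{w | m ≤ μ w}` and `{w | μ w ≰ m}` are upward closed, and `μ⁻¹(m)` is the first minus the second.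
By Higman's lemma an upward closed language is a finite union of shuffle ideals
`B* u₁ B* ⋯ B* uₙ B*`, and a shuffle ideal is regular by Myhill–Nerode: its left quotients are the
shuffle ideals of suffixes of `u`. -/

namespace List

variable {B : Type*}

theorem wellQuasiOrdered_sublist [Finite B] : WellQuasiOrdered (@Sublist B) := by
  intro f
  have higman := (Set.partiallyWellOrderedOn_univ_iff.mpr (Finite.wellQuasiOrdered (· = ·)))
    |>.partiallyWellOrderedOn_sublistForall₂ (· = · : B → B → Prop)
  obtain ⟨m, n, hmn, hsub⟩ := higman (fun n => ⟨f n, fun _ _ => Set.mem_univ _⟩)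
  obtain ⟨l, hl, hsl⟩ := sublistForall₂_iff.mp hsub
  obtain rfl : f m = l := by rwa [forall₂_eq_eq_eq] at hl
  exact ⟨m, n, hmn, hsl⟩

end List

namespace Language

open List

variable {B : Type*}

def shuffleIdeal (u : List B) : Language B := {v | u <+ v}

@[simp]
theorem mem_shuffleIdeal {u v : List B} : v ∈ shuffleIdeal u ↔ u <+ v := Iff.rfl

theorem exists_finset_eq_iSup_shuffleIdeal [Finite B] {S : Language B}
    (hS : ∀ ⦃u v⦄, u <+ v → u ∈ S → v ∈ S) :
    ∃ T : Finset (List B), S = ⨆ u ∈ T, shuffleIdeal u := by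
  set T : Set (List B) := {u ∈ S | ∀ w ∈ S, w <+ u → w = u}
  have hT : T.Finite := IsAntichain.finite_of_wellQuasiOrdered
    (fun u hu w hw hne huw => hne (hw.2 u hu.1 huw)) wellQuasiOrdered_sublist
  refine ⟨hT.toFinset, le_antisymm (fun v hv => ?_)
    (iSup₂_le fun u hu _ huv => hS huv (hT.mem_toFinset.mp hu).1)⟩
  obtain ⟨u, ⟨huS, huv⟩, hmin⟩ :=
    (measure length).wf.has_min {w | w ∈ S ∧ w <+ v} ⟨v, hv, Sublist.refl v⟩
  have huT : u ∈ T := ⟨huS, fun w hwS hwu =>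
    hwu.eq_of_length_le (not_lt.mp (hmin w ⟨hwS, hwu.trans huv⟩))⟩
  exact mem_iSup.mpr ⟨u, mem_iSup.mpr ⟨hT.mem_toFinset.mpr huT, huv⟩⟩

theorem isRegular_bot : (⊥ : Language B).IsRegular :=
  IsRegular.of_finite_range_leftQuotient <| (Set.finite_singleton ⊥).subset <|
    Set.range_subset_iff.mpr fun _ => rfl

theorem isRegular_biSup {ι : Type*} (T : Finset ι) {L : ι → Language B}
    (hL : ∀ i ∈ T, (L i).IsRegular) : IsRegular (⨆ i ∈ T, L i) := by
  classical
  induction T using Finset.induction_on with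
  | empty => simpa using isRegular_bot
  | insert a T _ ih =>
    rw [Finset.iSup_insert]
    exact (hL a (Finset.mem_insert_self a T)).add
      (ih fun i hi => hL i (Finset.mem_insert_of_mem hi))

theorem exists_leftQuotient_singleton_shuffleIdeal (u : List B) (a : B) :
    ∃ t, t <:+ u ∧ (shuffleIdeal u).leftQuotient [a] = shuffleIdeal t := by
  match u with
  | [] => exact ⟨[], suffix_refl [], by ext; simp⟩
  | b :: u =>
    by_cases hab : b = a
    · exact ⟨u, suffix_cons b u, by ext; simp [hab]⟩
    · exact ⟨b :: u, suffix_refl _, by ext; simp [cons_sublist_cons', hab]⟩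

theorem exists_leftQuotient_shuffleIdeal (u x : List B) :
    ∃ t, t <:+ u ∧ (shuffleIdeal u).leftQuotient x = shuffleIdeal t := by
  induction x generalizing u with
  | nil => exact ⟨u, suffix_refl u, rfl⟩
  | cons a x ih =>
    obtain ⟨t, htu, ht⟩ := exists_leftQuotient_singleton_shuffleIdeal u a
    obtain ⟨t', ht't, ht'⟩ := ih t
    refine ⟨t', ht't.trans htu, ?_⟩
    rw [← singleton_append, leftQuotient_append, ht, ht']

theorem isRegular_shuffleIdeal (u : List B) : (shuffleIdeal u).IsRegular := by
  refine IsRegular.of_finite_range_leftQuotient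
    (((finite_toSet u.tails).image shuffleIdeal).subset ?_)
  rintro _ ⟨x, rfl⟩
  obtain ⟨t, htu, ht⟩ := exists_leftQuotient_shuffleIdeal u x
  exact ⟨t, (mem_tails t u).mpr htu, ht.symm⟩

theorem isRegular_of_sublist_upwardClosed [Finite B] {S : Language B}
    (hS : ∀ ⦃u v⦄, u <+ v → u ∈ S → v ∈ S) : S.IsRegular := by
  obtain ⟨T, rfl⟩ := exists_finset_eq_iSup_shuffleIdeal hS
  exact isRegular_biSup T fun u _ => isRegular_shuffleIdeal u

theorem isRegular_setOf_eq_of_sublist_monotone [Finite B] {α : Type*} [PartialOrder α]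
    {f : List B → α} (hf : ∀ ⦃u v⦄, u <+ v → f u ≤ f v) (a : α) :
    IsRegular {w | f w = a} := by
  have hge : IsRegular {w | a ≤ f w} :=
    isRegular_of_sublist_upwardClosed fun _ _ huv hu => hu.trans (hf huv)
  have hnle : IsRegular {w | ¬f w ≤ a} :=
    isRegular_of_sublist_upwardClosed fun _ _ huv hu hv => hu ((hf huv).trans hv)
  have hfiber : {w | f w = a} = {w | a ≤ f w} ⊓ ({w | ¬f w ≤ a} : Language B)ᶜ := by
    ext w
    simp [le_antisymm_iff, and_comm]
  exact hfiber ▸ hge.inf hnle.compl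

end Language

namespace FreeMonoid

open List in
theorem map_ofList_le_of_sublist {B M : Type*} [Monoid M] [Preorder M]
    [MulLeftMono M] [MulRightMono M] (f : FreeMonoid B →* M) (hf : ∀ a, 1 ≤ f (of a))
    {u v : List B} (h : u <+ v) : f (ofList u) ≤ f (ofList v) := by
  induction h with
  | slnil => exact le_rfl
  | cons a _ ih =>
    rw [ofList_cons, map_mul]
    exact ih.trans (le_mul_of_one_le_left' (hf a))
  | cons_cons a _ ih =>
    rw [ofList_cons, ofList_cons, map_mul, map_mul]
    exact mul_le_mul_right ih _

end FreeMonoid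

theorem one_le_of_mem_epsLang {A : Type} {L : Language A} (h : L ∈ epsLang A) : 1 ≤ L :=
  Set.singleton_subset_iff.mpr h

theorem epsLang_isPreRational_general (A : Type) :
    IsPreRational (epsLang A) := by
  intro B _ μ m
  let f := (epsLang A).subtype.comp μ
  have hf_mono {u v : List B} (h : u.Sublist v) : f (.ofList u) ≤ f (.ofList v) :=
    FreeMonoid.map_ofList_le_of_sublist f (fun a => one_le_of_mem_epsLang (μ (.of a)).2) h
  simpa only [f, MonoidHom.coe_comp, Function.comp_apply, Submonoid.coe_subtype,
    Subtype.val_inj] using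
    Language.isRegular_setOf_eq_of_sublist_monotone (fun _ _ => hf_mono) (m : Language A)

/-- For a finite alphabet `A`, the monoid of languages over `A` containing the empty word,
under concatenation, is pre-rational. -/
theorem epsLang_isPreRational (A : Type) [Fintype A] :
    IsPreRational (epsLang A) :=
  epsLang_isPreRational_general A
end

section
/- Let K be a rationally additive semiring and let (α_i)_{i∈I} and (β_i)_{i∈I} be two countable families of elements of K with disjoint supports, i.e., for all i ∈ I, α_i = 0 or β_i = 0. If Σ_{i∈I} α_i and Σ_{i∈I} β_i exist, then Σ_{i∈I} (α_i + β_i) exists and equals (Σ_{i∈I} α_i) + (Σ_{i∈I} β_i). -/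
/-- A *rationally additive semiring* is a semiring `K` equipped with a partial operator
assigning to some (countable) families `(f i)_{i ∈ I}` a sum `sum f ∈ K` (`Option`-valued:
`some s` means the sum exists and equals `s`, `none` means the family is not summable),
satisfying axioms (Ax1)–(Ax5) of Ésik and Kuich. Disjoint countable partitions of the index
set `I` are represented by a map `p : I → J` whose fibres are the blocks. -/
structure RatAdd (K : Type) [Semiring K] : Type 1 where
  /-- the partial countable-sum operator -/
  sum : {I : Type} → (I → K) → Option K
  /-- (Ax1) every finite family is summable, with the usual finite sum as its sum -/
  ax1 : ∀ {I : Type} [Fintype I] (f : I → K), sum f = some (∑ i, f i)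
  /-- (Ax2) geometric families are summable -/
  ax2 : ∀ α : K, (sum fun n : ℕ => α ^ n).isSome
  /-- (Ax3, left) products distribute on the left over existing sums -/
  ax3l : ∀ {I : Type} [Countable I] (f : I → K) (s β : K),
    sum f = some s → sum (fun i => β * f i) = some (β * s)
  /-- (Ax3, right) products distribute on the right over existing sums -/
  ax3r : ∀ {I : Type} [Countable I] (f : I → K) (s β : K),
    sum f = some s → sum (fun i => f i * β) = some (s * β)
  /-- (Ax4) if each block of a countable partition is summable with sum `r j`, and the
  family of the `r j` is summable with sum `s`, then the whole family is summable with sum `s` -/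
  ax4 : ∀ {I J : Type} [Countable I] [Countable J] (p : I → J) (f : I → K) (r : J → K),
    (∀ j : J, sum (fun i : {i : I // p i = j} => f i.val) = some (r j)) →
    ∀ s : K, sum r = some s → sum f = some s
  /-- (Ax5) if the whole family is summable with sum `s`, and each block of a countable
  partition is summable with sum `r j`, then the family of the `r j` is summable with sum `s` -/
  ax5 : ∀ {I J : Type} [Countable I] [Countable J] (p : I → J) (f : I → K) (r : J → K),
    (∀ j : J, sum (fun i : {i : I // p i = j} => f i.val) = some (r j)) →
    ∀ s : K, sum f = some s → sum r = some s


/-- Reindexing: an existing sum is preserved under composition with an equivalence of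
index types. Derived from (Ax1) and (Ax4) using the partition of the source by the
(singleton) fibres of the equivalence. -/
theorem RatAdd.sum_comp_equiv {K : Type} [Semiring K] (R : RatAdd K)
    {I I' : Type} [Countable I] [Countable I'] (e : I' ≃ I) (f : I → K) (s : K)
    (h : R.sum f = some s) : R.sum (fun i' => f (e i')) = some s := by
  apply R.ax4 (p := fun i' => e i') (f := fun i' => f (e i')) (r := f) _ s h
  intro i
  haveI : Unique {i' : I' // e i' = i} :=
    ⟨⟨⟨e.symm i, by simp⟩⟩, fun x => Subtype.ext (e.injective (by simp [x.2]))⟩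
  rw [R.ax1]
  congr 1
  rw [Fintype.sum_unique]
  exact congrArg f (default : {i' : I' // e i' = i}).2

/-- If two countable families `(α i)` and `(β i)` in a rationally additive semiring have
disjoint supports (for every `i`, `α i = 0` or `β i = 0`) and are both summable, then the
family `(α i + β i)` is summable, with sum the sum of the two sums. -/
theorem ratAdd_sum_add_of_disjoint_support (K : Type) [Semiring K] (R : RatAdd K)
    (I : Type) [Countable I] (α β : I → K)
    (hdisj : ∀ i : I, α i = 0 ∨ β i = 0) (a b : K)
    (ha : R.sum α = some a) (hb : R.sum β = some b) :
    R.sum (fun i => α i + β i) = some (a + b) := by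
  set f : I × Bool → K := fun x => cond x.2 (α x.1) (β x.1) with hf
  have hstep : ∀ (j : Bool) (g : I → K) (s : K), R.sum g = some s →
      (∀ i : I, f (i, j) = g i) →
      R.sum (fun x : {x : I × Bool // x.2 = j} => f x.val) = some s := by
    intro j g s hg hgf
    let e : {x : I × Bool // x.2 = j} ≃ I :=
      ⟨fun x => x.1.1, fun i => ⟨(i, j), rfl⟩,
        by rintro ⟨⟨i, b⟩, rfl⟩; rfl, fun i => rfl⟩
    have h2 := R.sum_comp_equiv e g s hg
    have heq : (fun x : {x : I × Bool // x.2 = j} => f x.val)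
        = fun x => g (e x) := by
      funext x
      obtain ⟨⟨i, b⟩, rfl⟩ := x
      exact hgf i
    rw [heq]
    exact h2
  have hA : R.sum f = some (a + b) := by
    apply R.ax4 (p := Prod.snd) (f := f) (r := fun j => cond j a b) _ (a + b)
    · have h1 := R.ax1 (fun j : Bool => cond j a b)
      rwa [Fintype.sum_bool] at h1
    · intro j
      cases j with
      | false => exact hstep false β b hb (fun i => rfl)
      | true => exact hstep true α a ha (fun i => rfl)
  apply R.ax5 (p := Prod.fst) (f := f) (r := fun i => α i + β i) _ (a + b) hA
  intro i
  have hg : R.sum (fun bb : Bool => f (i, bb)) = some (α i + β i) := by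
    have h1 := R.ax1 (fun bb : Bool => f (i, bb))
    rwa [Fintype.sum_bool] at h1
  let e : {x : I × Bool // x.1 = i} ≃ Bool :=
    ⟨fun x => x.1.2, fun bb => ⟨(i, bb), rfl⟩,
      by rintro ⟨⟨i', b⟩, rfl⟩; rfl, fun bb => rfl⟩
  have h2 := R.sum_comp_equiv e (fun bb : Bool => f (i, bb)) _ hg
  have heq : (fun x : {x : I × Bool // x.1 = i} => f x.val)
      = fun x => f (i, e x) := by
    funext x
    obtain ⟨⟨i', b⟩, rfl⟩ := x
    rfl
  rw [heq]
  exact h2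
end

section
/- Let K be a rationally additive semiring, A a finite alphabet, π : A* → K a monoid homomorphism from the free monoid A* into the multiplicative monoid of K, and L ⊆ A* a regular language. Then the (possibly infinite) sum Σ_{w∈L} π(w) exists in K. -/
namespace RatAdd

variable {K : Type} [Semiring K] (R : RatAdd K)

theorem sum_eq_of_comp_equiv {I J : Type} [Countable I] (e : J ≃ I) (f : I → K) {s : K}
    (h : R.sum (f ∘ e) = some s) : R.sum f = some s := by
  have : Countable J := e.injective.countable
  refine R.ax4 e.symm f (f ∘ e) (fun j => ?_) s h
  let : Unique {i // e.symm i = j} :=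
    ⟨⟨⟨e j, e.symm_apply_apply j⟩⟩, fun i => Subtype.ext (e.symm_apply_eq.mp i.2)⟩
  rw [R.ax1, Fintype.sum_unique]
  rfl

theorem sum_comp_equiv_s8 {I J : Type} [Countable I] (e : J ≃ I) (f : I → K) :
    R.sum (f ∘ e) = R.sum f := by
  have : Countable J := e.injective.countable
  refine Option.ext fun s => ⟨R.sum_eq_of_comp_equiv e f, fun h => ?_⟩
  refine R.sum_eq_of_comp_equiv e.symm (f ∘ e) ?_
  rwa [Function.comp_assoc, e.self_comp_symm, Function.comp_id]

theorem sum_comp_bijective {I J : Type} [Countable I] {g : J → I} (hg : g.Bijective)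
    (f : I → K) : R.sum (f ∘ g) = R.sum f :=
  R.sum_comp_equiv_s8 (Equiv.ofBijective g hg) f

theorem exists_sum_of_finite {I : Type} [Finite I] (f : I → K) : ∃ s, R.sum f = some s := by
  have := Fintype.ofFinite I
  exact ⟨_, R.ax1 f⟩

theorem sum_sigma {J : Type} {I : J → Type} [Countable J] [∀ j, Countable (I j)]
    (f : (Σ j, I j) → K) (r : J → K) (hr : ∀ j, R.sum (fun i => f ⟨j, i⟩) = some (r j))
    {s : K} (hs : R.sum r = some s) : R.sum f = some s :=
  R.ax4 Sigma.fst f r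
    (fun j => (R.sum_comp_equiv_s8 (Equiv.sigmaSubtype j).symm _).symm.trans (hr j)) s hs

theorem sum_sum_elim {I J : Type} [Countable I] [Countable J] {f : I → K} {g : J → K}
    {s t : K} (hf : R.sum f = some s) (hg : R.sum g = some t) :
    R.sum (Sum.elim f g) = some (s + t) := by
  rw [← R.sum_comp_equiv_s8 (Equiv.sumEquivSigmaBool I J).symm]
  have : ∀ b, Countable (bif b then J else I) := fun b => by cases b <;> assumption
  refine R.sum_sigma _ (fun b => cond b t s) (fun b => ?_) ?_
  · cases b
    · exact hf
    · exact hg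
  · rw [R.ax1, Fintype.sum_bool, add_comm]
    rfl

theorem sum_prod_mul {I J : Type} [Countable I] [Countable J] {f : I → K} {g : J → K}
    {s t : K} (hf : R.sum f = some s) (hg : R.sum g = some t) :
    R.sum (fun x : I × J => f x.1 * g x.2) = some (s * t) := by
  rw [← R.sum_comp_equiv_s8 (Equiv.sigmaEquivProd I J)]
  exact R.sum_sigma _ (fun i => f i * t) (fun i => R.ax3l g t (f i) hg) (R.ax3r f s t hf)

theorem sum_ofFn_prod {I : Type} [Countable I] {f : I → K} {s : K} (hf : R.sum f = some s) :
    ∀ n : ℕ, R.sum (fun x : Fin n → I => (List.ofFn (f ∘ x)).prod) = some (s ^ n)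
  | 0 => by
    rw [R.ax1]
    simp
  | n + 1 => by
    rw [← R.sum_comp_equiv_s8 (Fin.consEquiv fun _ => I), pow_succ']
    convert R.sum_prod_mul hf (sum_ofFn_prod hf n) using 3 with x
    simp [List.ofFn_succ, Function.comp_def]

theorem sum_list_prod {I : Type} [Countable I] {f : I → K} {s t : K} (hf : R.sum f = some s)
    (ht : R.sum (fun n : ℕ => s ^ n) = some t) :
    R.sum (fun l : List I => (l.map f).prod) = some t := by
  rw [← R.sum_comp_equiv_s8 List.equivSigmaTuple.symm]
  refine R.sum_sigma _ _ (fun n => ?_) ht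
  convert R.sum_ofFn_prod hf n using 3 with x
  simp [List.equivSigmaTuple, List.map_ofFn]

theorem exists_sum_union {ι : Type} [Countable ι] {s t : Set ι} (hst : Disjoint s t)
    (f : ι → K) (hs : ∃ a, R.sum (fun i : s => f i) = some a)
    (ht : ∃ b, R.sum (fun i : t => f i) = some b) :
    ∃ c, R.sum (fun i : ↥(s ∪ t) => f i) = some c := by
  classical
  obtain ⟨a, ha⟩ := hs
  obtain ⟨b, hb⟩ := ht
  refine ⟨a + b, ?_⟩
  rw [← R.sum_comp_equiv_s8 (Equiv.Set.union hst).symm]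
  convert R.sum_sum_elim ha hb using 2
  funext x
  rcases x with x | x <;> simp

end RatAdd

theorem Function.Bijective.foldr_inr {B C T : Type*} {ψ : B ⊕ C × T → T} (hψ : ψ.Bijective)
    (size : T → ℕ) (hsize : ∀ c t, size t < size (ψ (.inr (c, t)))) :
    Function.Bijective fun x : List C × B =>
      x.1.foldr (fun c t => ψ (.inr (c, t))) (ψ (.inl x.2)) := by
  refine ⟨fun ⟨cs, b⟩ ⟨cs', b'⟩ h => ?_, fun t => ?_⟩
  · induction cs generalizing cs' with
    | nil =>
      cases cs' with
      | nil => simpa using hψ.1 h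
      | cons => simpa using hψ.1 h
    | cons c cs ih =>
      cases cs' with
      | nil => simpa using hψ.1 h
      | cons c' cs' =>
        obtain ⟨rfl, htail⟩ : c = c' ∧ _ := by simpa using hψ.1 h
        simpa using ih cs' htail
  · induction t using (measure size).wf.induction with
    | _ t ih =>
      obtain ⟨b | ⟨c, t'⟩, rfl⟩ := hψ.2 t
      · exact ⟨([], b), rfl⟩
      · obtain ⟨⟨cs, b⟩, rfl⟩ := ih t' (hsize c t')
        exact ⟨(c :: cs, b), rfl⟩

namespace DFA

variable {α σ : Type*} (M : DFA α σ)

/-- The states that the run of `M` from `p` on `w` passes strictly between its first and last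
state all lie in `X`. -/
def InteriorIn (X : Set σ) : σ → List α → Prop
  | _, [] | _, [_] => True
  | p, a :: b :: w => M.step p a ∈ X ∧ InteriorIn X (M.step p a) (b :: w)

def paths (X : Set σ) (p : σ) (F : Set σ) : Set (List α) :=
  {w | w ≠ [] ∧ M.evalFrom p w ∈ F ∧ M.InteriorIn X p w}

variable {M} {X Y F : Set σ} {p r : σ} {u v w : List α}

theorem InteriorIn.mono (hXY : X ⊆ Y) : ∀ {p : σ} {w : List α}, M.InteriorIn X p w →
    M.InteriorIn Y p w
  | _, [], _ | _, [_], _ => trivial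
  | _, _ :: _ :: _, ⟨ha, hw⟩ => ⟨hXY ha, hw.mono hXY⟩

theorem interiorIn_univ : ∀ {p : σ} {w : List α}, M.InteriorIn Set.univ p w
  | _, [] | _, [_] => trivial
  | _, _ :: _ :: _ => ⟨trivial, interiorIn_univ⟩

theorem interiorIn_append (hu : u ≠ []) (hv : v ≠ []) :
    M.InteriorIn X p (u ++ v) ↔
      M.InteriorIn X p u ∧ M.evalFrom p u ∈ X ∧ M.InteriorIn X (M.evalFrom p u) v := by
  induction u generalizing p with
  | nil => exact absurd rfl hu
  | cons a u ih =>
    obtain ⟨b, v, rfl⟩ := List.exists_cons_of_ne_nil hv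
    cases u with
    | nil => simp [InteriorIn]
    | cons c u =>
      show M.step p a ∈ X ∧ M.InteriorIn X _ (c :: u ++ b :: v) ↔ _
      rw [ih (List.cons_ne_nil c u)]
      simp [InteriorIn, and_assoc]

theorem paths_mono (hXY : X ⊆ Y) : M.paths X p F ⊆ M.paths Y p F :=
  fun _ ⟨hw, hF, hint⟩ => ⟨hw, hF, hint.mono hXY⟩

theorem append_mem_paths (hu : u ∈ M.paths X p {r}) (hv : v ∈ M.paths X r F) (hr : r ∈ X) :
    u ++ v ∈ M.paths X p F := by
  obtain ⟨hu, rfl, hint_u⟩ := hu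
  obtain ⟨hv, hF, hint_v⟩ := hv
  exact ⟨by simp [hu], by rwa [evalFrom_of_append],
    (interiorIn_append hu hv).2 ⟨hint_u, hr, hint_v⟩⟩

theorem paths_empty_subset : M.paths ∅ p F ⊆ Set.range fun a : α => [a] := by
  rintro (_ | ⟨a, _ | ⟨b, w⟩⟩) ⟨hw, -, hint⟩
  · exact absurd rfl hw
  · exact ⟨a, rfl⟩
  · exact hint.1.elim

theorem mem_accepts_iff : w ∈ M.accepts ↔
    w = [] ∧ M.start ∈ M.accept ∨ w ∈ M.paths Set.univ M.start M.accept := by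
  rcases eq_or_ne w [] with rfl | hw
  · simp [mem_accepts, eval, paths]
  · simp [mem_accepts, eval, paths, hw, interiorIn_univ]

theorem not_interiorIn_append (hr : r ∉ X) (hu : u ∈ M.paths X p {r}) (hv : v ≠ []) :
    ¬ M.InteriorIn X p (u ++ v) := by
  obtain ⟨hu, rfl, -⟩ := hu
  exact fun h => hr ((interiorIn_append hu hv).1 h).2.1

theorem eq_of_append_eq_append (hr : r ∉ X) {u' v' : List α} (hu : u ∈ M.paths X p {r})
    (hu' : u' ∈ M.paths X p {r}) (hv : v ≠ []) (hv' : v' ≠ []) (h : u ++ v = u' ++ v') :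
    u = u' := by
  rcases List.append_eq_append_iff.1 h with ⟨m, rfl, rfl⟩ | ⟨m, rfl, rfl⟩
  · rcases eq_or_ne m [] with rfl | hm
    · simp
    · exact absurd hu'.2.2 (not_interiorIn_append hr hu hm)
  · rcases eq_or_ne m [] with rfl | hm
    · simp
    · exact absurd hu.2.2 (not_interiorIn_append hr hu' hm)

theorem mem_paths_insert (hw : w ∈ M.paths (insert r X) p F) :
    w ∈ M.paths X p F ∨
      ∃ u ∈ M.paths X p {r}, ∃ v ∈ M.paths (insert r X) r F, w = u ++ v := by
  induction w generalizing p with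
  | nil => exact absurd rfl hw.1
  | cons a w ih =>
    obtain ⟨-, hF, hint⟩ := hw
    rcases w with _ | ⟨b, w⟩
    · exact .inl ⟨by simp, hF, trivial⟩
    have ha : [a] ∈ M.paths X p {M.step p a} := ⟨by simp, by simp, trivial⟩
    have htail : b :: w ∈ M.paths (insert r X) (M.step p a) F := ⟨by simp, hF, hint.2⟩
    rcases hint.1 with hra | haX
    · exact .inr ⟨[a], hra ▸ ha, b :: w, hra ▸ htail, rfl⟩
    · rcases ih htail with h | ⟨u, hu, v, hv, huv⟩
      · exact .inl (append_mem_paths ha h haX)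
      · exact .inr ⟨a :: u, append_mem_paths ha hu haX, v, hv, by rw [huv]; rfl⟩

/-- The inverse of cutting a run at its first intermediate visit to `r`. -/
def joinAtVisit (M : DFA α σ) (r : σ) (X : Set σ) (p : σ) (F : Set σ) :
    M.paths X p F ⊕ M.paths X p {r} × M.paths (insert r X) r F → M.paths (insert r X) p F
  | .inl w => ⟨w, paths_mono (Set.subset_insert r X) w.2⟩
  | .inr (u, v) =>
    ⟨u ++ v, append_mem_paths (paths_mono (Set.subset_insert r X) u.2) v.2 (Set.mem_insert r X)⟩

theorem joinAtVisit_bijective (hr : r ∉ X) : (M.joinAtVisit r X p F).Bijective := by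
  refine ⟨?_, fun ⟨w, hw⟩ => ?_⟩
  · rintro (w | ⟨u, v⟩) (w' | ⟨u', v'⟩) h <;>
      simp only [joinAtVisit, Subtype.mk.injEq] at h
    · rw [Subtype.ext h]
    · exact absurd (h ▸ w.2.2.2) (not_interiorIn_append hr u'.2 v'.2.1)
    · exact absurd (h ▸ w'.2.2.2) (not_interiorIn_append hr u.2 v.2.1)
    · obtain rfl := Subtype.ext (eq_of_append_eq_append hr u.2 u'.2 v.2.1 v'.2.1 h)
      rw [Subtype.ext (List.append_cancel_left h)]
  · rcases mem_paths_insert hw with h | ⟨u, hu, v, hv, rfl⟩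
    · exact ⟨.inl ⟨w, h⟩, rfl⟩
    · exact ⟨.inr (⟨u, hu⟩, ⟨v, hv⟩), rfl⟩

theorem map_foldr_joinAtVisit {K : Type*} [Monoid K] {μ : List α → K}
    (hμ : ∀ u v, μ (u ++ v) = μ u * μ v) (cs : List (M.paths X r {r})) (b : M.paths X r F) :
    μ (cs.foldr (β := M.paths (insert r X) r F) (fun c t => M.joinAtVisit r X r F (.inr (c, t)))
      (M.joinAtVisit r X r F (.inl b))).1 = (cs.map fun c => μ c.1).prod * μ b := by
  induction cs with
  | nil => simp [joinAtVisit]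
  | cons c cs ih =>
    rw [List.foldr_cons, List.map_cons, List.prod_cons, mul_assoc, ← ih]
    exact hμ c _

end DFA

namespace RatAdd

variable {K : Type} [Semiring K] (R : RatAdd K) {α σ : Type} {M : DFA α σ}
  {μ : List α → K} {X F : Set σ} {p r : σ}

theorem sum_paths_insert_self [Countable α] (hμ : ∀ u v, μ (u ++ v) = μ u * μ v)
    (hr : r ∉ X) {s s' t : K}
    (hloop : R.sum (fun w : M.paths X r {r} => μ w) = some s)
    (hstar : R.sum (fun n : ℕ => s ^ n) = some s')
    (hexit : R.sum (fun w : M.paths X r F => μ w) = some t) :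
    R.sum (fun w : M.paths (insert r X) r F => μ w) = some (s' * t) := by
  have hsize (c : M.paths X r {r}) (t : M.paths (insert r X) r F) :
      t.1.length < (M.joinAtVisit r X r F (.inr (c, t))).1.length := by
    simp [DFA.joinAtVisit, List.length_pos_iff.2 c.2.1]
  rw [← R.sum_comp_bijective ((DFA.joinAtVisit_bijective hr).foldr_inr _ hsize)]
  convert R.sum_prod_mul (R.sum_list_prod hloop hstar) hexit using 2
  funext x
  exact DFA.map_foldr_joinAtVisit hμ x.1 x.2

theorem sum_paths_insert [Countable α] (hμ : ∀ u v, μ (u ++ v) = μ u * μ v)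
    (hr : r ∉ X) {a b c : K}
    (hdirect : R.sum (fun w : M.paths X p F => μ w) = some a)
    (hvisit : R.sum (fun w : M.paths X p {r} => μ w) = some b)
    (hrest : R.sum (fun w : M.paths (insert r X) r F => μ w) = some c) :
    R.sum (fun w : M.paths (insert r X) p F => μ w) = some (a + b * c) := by
  rw [← R.sum_comp_bijective (DFA.joinAtVisit_bijective hr)]
  convert R.sum_sum_elim hdirect (R.sum_prod_mul hvisit hrest) using 2
  funext x
  rcases x with w | ⟨u, v⟩
  · rfl
  · exact hμ u v

theorem exists_sum_paths [Finite α] (hμ : ∀ u v, μ (u ++ v) = μ u * μ v) (hX : X.Finite)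
    (p : σ) (F : Set σ) : ∃ s, R.sum (fun w : M.paths X p F => μ w) = some s := by
  induction X, hX using Set.Finite.induction_on generalizing p F with
  | empty =>
    have : Finite (M.paths ∅ p F) :=
      ((Set.finite_range _).subset DFA.paths_empty_subset).to_subtype
    exact R.exists_sum_of_finite _
  | @insert r X hr _ ih =>
    obtain ⟨s, hloop⟩ := ih r {r}
    obtain ⟨s', hstar⟩ := Option.isSome_iff_exists.1 (R.ax2 s)
    obtain ⟨t, hexit⟩ := ih r F
    obtain ⟨a, hdirect⟩ := ih p F
    obtain ⟨b, hvisit⟩ := ih p {r}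
    exact ⟨_, R.sum_paths_insert hμ hr hdirect hvisit
      (R.sum_paths_insert_self hμ hr hloop hstar hexit)⟩

end RatAdd

/-- For every finite alphabet `A`, every monoid homomorphism `π` from the free monoid `A*`
into the multiplicative monoid of a rationally additive semiring `K`, and every regular
language `L ⊆ A*`, the sum `Σ_{w ∈ L} π(w)` exists in `K`. -/
theorem ratAdd_sum_regular_exists (K : Type) [Semiring K] (R : RatAdd K)
    (A : Type) [Fintype A] (π : FreeMonoid A →* K)
    (L : Language A) (hL : L.IsRegular) :
    (R.sum (fun w : {w : List A // w ∈ L} => π (FreeMonoid.ofList w.val))).isSome := by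
  obtain ⟨σ, _, M, rfl⟩ := hL
  have hμ (u v : List A) :
      π (FreeMonoid.ofList (u ++ v)) = π (FreeMonoid.ofList u) * π (FreeMonoid.ofList v) := by
    rw [FreeMonoid.ofList_append, map_mul]
  have hdisj : Disjoint {w : List A | w = [] ∧ M.start ∈ M.accept}
      (M.paths Set.univ M.start M.accept) :=
    Set.disjoint_left.2 fun _ hnil hpath => hpath.1 hnil.1
  have : Finite {w : List A | w = [] ∧ M.start ∈ M.accept} :=
    ((Set.finite_singleton []).subset fun _ h => h.1).to_subtype
  obtain ⟨s, hs⟩ := R.exists_sum_union hdisj _ (R.exists_sum_of_finite _)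
    (R.exists_sum_paths hμ Set.finite_univ M.start M.accept)
  exact Option.isSome_iff_exists.2
    ⟨s, (R.sum_comp_equiv_s8 (Equiv.subtypeEquivRight fun _ => DFA.mem_accepts_iff) _).trans hs⟩
end

section
/- For every K-expression W over a monoid M, the Kleene expression ⌈W°⌉ (the indexed expression of the marked expression W°) is unambiguous. -/
/-- `K`-expressions over a monoid `M`, generated by the grammar
`W ::= k | m | W + W | W·W | W*` with `k ∈ K` and `m ∈ M`. -/
inductive WExp (M K : Type) : Type where
  | scalar : K → WExp M K
  | atom : M → WExp M K
  | add : WExp M K → WExp M K → WExp M K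
  | mul : WExp M K → WExp M K → WExp M K
  | star : WExp M K → WExp M K

namespace WExp

variable {M K : Type} [Monoid M] [Semiring K]

open Classical in
/-- The Cauchy product of two partial series: `(s ⋆ t)(m) = Σ_{m₁m₂ = m} s(m₁)·t(m₂)`,
defined when all the relevant values of `s` and `t` exist and the sum exists. -/
noncomputable def cauchy (R : RatAdd K) (s t : M → Option K) (m : M) : Option K :=
  if h : ∀ p : M × M, p.1 * p.2 = m → ((s p.1).isSome ∧ (t p.2).isSome) then
    R.sum (fun p : {p : M × M // p.1 * p.2 = m} =>
      ((s p.val.1).get ((h p.val p.property).1)) * ((t p.val.2).get ((h p.val p.property).2)))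
  else none

open Classical in
/-- The semantics of the `n`-th power `Wⁿ` of an expression with semantics `s`
(`W⁰ = 1`, `Wⁿ = W·Wⁿ⁻¹`). -/
noncomputable def powSem (R : RatAdd K) (s : M → Option K) : ℕ → M → Option K
  | 0 => fun m => some (if m = (1 : M) then (1 : K) else 0)
  | n + 1 => cauchy R s (powSem R s n)

open Classical in
/-- The (partial) semantics `⟦W⟧ : M → Option K` of a `K`-expression over `M`:
`⟦k⟧` maps the neutral element to `k` and everything else to `0`; `⟦m⟧` is the
characteristic function of `m`; `⟦U + V⟧ = ⟦U⟧ + ⟦V⟧`; `⟦U·V⟧(m) = Σ_{m₁m₂=m} ⟦U⟧(m₁)·⟦V⟧(m₂)`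
if this sum exists; `⟦U*⟧(m) = Σ_{n=0}^∞ ⟦Uⁿ⟧(m)` if this sum exists. -/
noncomputable def sem (R : RatAdd K) : WExp M K → M → Option K
  | scalar k => fun m => some (if m = (1 : M) then k else 0)
  | atom n => fun m => some (if m = n then (1 : K) else 0)
  | add U V => fun m =>
      match U.sem R m, V.sem R m with
      | some a, some b => some (a + b)
      | _, _ => none
  | mul U V => cauchy R (U.sem R) (V.sem R)
  | star U => fun m =>
      if h : ∀ n : ℕ, (powSem R (U.sem R) n m).isSome then
        R.sum (fun n : ℕ => (powSem R (U.sem R) n m).get (h n))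
      else none

/-- An expression is *valid* when its semantics, and the semantics of all of its
subexpressions, exist at every point of `M`. -/
def Valid (R : RatAdd K) : WExp M K → Prop
  | scalar k => ∀ m : M, ((scalar k : WExp M K).sem R m).isSome
  | atom n => ∀ m : M, ((atom n : WExp M K).sem R m).isSome
  | add U V => Valid R U ∧ Valid R V ∧ ∀ m : M, ((add U V).sem R m).isSome
  | mul U V => Valid R U ∧ Valid R V ∧ ∀ m : M, ((mul U V).sem R m).isSome
  | star U => Valid R U ∧ ∀ m : M, ((star U).sem R m).isSome

end WExp
namespace RegularExpression

/-- A Kleene (regular) expression is *unambiguous* if for every subexpression: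
a union has disjoint languages of operands, a concatenation induces at most one
factorization of every word, and a Kleene star induces at most one decomposition of
every word as a concatenation of words of the language of its operand. -/
def Unambiguous {A : Type} : RegularExpression A → Prop
  | .zero => True
  | .epsilon => True
  | .char _ => True
  | .plus F G => F.Unambiguous ∧ G.Unambiguous ∧
      ∀ w : List A, ¬ (w ∈ F.matches' ∧ w ∈ G.matches')
  | .comp F G => F.Unambiguous ∧ G.Unambiguous ∧
      ∀ u₁ v₁ u₂ v₂ : List A, u₁ ∈ F.matches' → u₂ ∈ F.matches' →
        v₁ ∈ G.matches' → v₂ ∈ G.matches' → u₁ ++ v₁ = u₂ ++ v₂ → u₁ = u₂ ∧ v₁ = v₂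
  | .star F => F.Unambiguous ∧
      ∀ l₁ l₂ : List (List A), (∀ u ∈ l₁, u ∈ F.matches') → (∀ u ∈ l₂, u ∈ F.matches') →
        l₁.flatten = l₂.flatten → l₁ = l₂

/-- The subexpressions of a regular expression (every expression is a subexpression
of itself). -/
inductive IsSubexpr {A : Type} : RegularExpression A → RegularExpression A → Prop
  | refl (E : RegularExpression A) : IsSubexpr E E
  | plus_left {E F G : RegularExpression A} : IsSubexpr E F → IsSubexpr E (F.plus G)
  | plus_right {E F G : RegularExpression A} : IsSubexpr E G → IsSubexpr E (F.plus G)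
  | comp_left {E F G : RegularExpression A} : IsSubexpr E F → IsSubexpr E (F.comp G)
  | comp_right {E F G : RegularExpression A} : IsSubexpr E G → IsSubexpr E (F.comp G)
  | star {E F : RegularExpression A} : IsSubexpr E F → IsSubexpr E F.star

/-- `E_{λ,π}`: the `K`-expression over `M` obtained from a Kleene expression `E` by
substituting every letter `a` by the expression `λ(a)·π(a)`, and replacing the Boolean
constants true and false by `1 ∈ K` and `0 ∈ K`. -/
def toWExp {A M K : Type} [Semiring K] (lam : A → M) (pi : A → K) :
    RegularExpression A → WExp M K
  | .zero => .scalar 0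
  | .epsilon => .scalar 1
  | .char a => .mul (.atom (lam a)) (.scalar (pi a))
  | .plus F G => .add (F.toWExp lam pi) (G.toWExp lam pi)
  | .comp F G => .mul (F.toWExp lam pi) (G.toWExp lam pi)
  | .star F => .star (F.toWExp lam pi)

end RegularExpression

namespace WExp

/-- Auxiliary function for `WExp.indexed`: builds the indexed Kleene expression of `W`,
threading a counter so that each occurrence of an atomic subexpression receives a unique
index, numbered from left to right starting from the given value. -/
def indexedAux {M K : Type} : WExp M K → ℕ → RegularExpression ((K ⊕ M) × ℕ) × ℕ
  | .scalar k, n => (RegularExpression.char (Sum.inl k, n), n + 1)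
  | .atom m, n => (RegularExpression.char (Sum.inr m, n), n + 1)
  | .add U V, n =>
      let p := U.indexedAux n
      let q := V.indexedAux p.2
      (p.1.plus q.1, q.2)
  | .mul U V, n =>
      let p := U.indexedAux n
      let q := V.indexedAux p.2
      (p.1.comp q.1, q.2)
  | .star U, n =>
      let p := U.indexedAux n
      (p.1.star, p.2)

/-- The *indexed expression* `⌈W⌉` of a `K`-expression `W` over `M`: the Kleene expression
over the alphabet `(K ⊕ M) × ℕ` obtained by replacing each occurrence of an atomic
subexpression `ℓ ∈ K ⊕ M` by the letter `(ℓ, i)`, where `i` is a unique index per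
occurrence (numbered from left to right starting at `0`). -/
def indexed {M K : Type} (W : WExp M K) : RegularExpression ((K ⊕ M) × ℕ) :=
  (W.indexedAux 0).1

/-- The letter-to-`M` projection `λ` for indexed expressions: `λ(x, n) = x` if `x ∈ M`
and `λ(x, n) = 1_M` if `x ∈ K`. -/
def idxLam {M K : Type} [Monoid M] : (K ⊕ M) × ℕ → M :=
  fun x => Sum.elim (fun _ => (1 : M)) id x.1

/-- The letter-to-`K` projection `π` for indexed expressions: `π(x, n) = x` if `x ∈ K`
and `π(x, n) = 1` if `x ∈ M`. -/
def idxPi {M K : Type} [Semiring K] : (K ⊕ M) × ℕ → K :=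
  fun x => Sum.elim id (fun _ => (1 : K)) x.1

/-- The *marked expression* `W°` of a `K`-expression `W`: a dummy marker `·1` is
concatenated after every Kleene star. -/
def marked {M K : Type} [Semiring K] : WExp M K → WExp M K
  | .scalar k => .scalar k
  | .atom m => .atom m
  | .add U V => .add U.marked V.marked
  | .mul U V => .mul U.marked V.marked
  | .star U => .mul (.star U.marked) (.scalar 1)

end WExp

/-! The marker `·1` after each star of `W°` receives a fresh index, so for every
subexpression `V` of `W` the language of `⌈V°⌉` is a prefix code without the empty word:
for `V = U*` because the fresh letter ends every word of `⌈U°⌉*·1` and occurs nowhere else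
in it. Unique factorization in products and stars follows from prefix-freeness, and the two
operands of a sum have disjoint languages because their letters carry indices from disjoint
ranges. -/

namespace Language

variable {A : Type}

def IsPrefixFree (L : Language A) : Prop :=
  ∀ u ∈ L, ∀ v ∈ L, u <+: v → u = v

theorem not_prefix_of_forall_mem {p : A → Prop} {u v : List A} (hu : u ≠ [])
    (hpu : ∀ x ∈ u, p x) (hpv : ∀ x ∈ v, ¬ p x) : ¬ u <+: v := by
  intro huv
  obtain ⟨x, hx⟩ := List.exists_mem_of_ne_nil u hu
  exact hpv x (huv.subset hx) (hpu x hx)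

namespace IsPrefixFree

variable {L L₁ L₂ : Language A}

theorem eq_of_append_eq (h : L.IsPrefixFree) {u₁ u₂ v₁ v₂ : List A} (hu₁ : u₁ ∈ L)
    (hu₂ : u₂ ∈ L) (heq : u₁ ++ v₁ = u₂ ++ v₂) : u₁ = u₂ ∧ v₁ = v₂ := by
  have hu : u₁ = u₂ := by
    rcases List.prefix_or_prefix_of_prefix ⟨v₁, heq⟩ ⟨v₂, rfl⟩ with h₁₂ | h₂₁
    · exact h u₁ hu₁ u₂ hu₂ h₁₂
    · exact (h u₂ hu₂ u₁ hu₁ h₂₁).symm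
  subst hu
  exact ⟨rfl, List.append_cancel_left heq⟩

theorem flatten_inj (h : L.IsPrefixFree) (hnil : [] ∉ L) :
    ∀ {l₁ l₂ : List (List A)}, (∀ u ∈ l₁, u ∈ L) → (∀ u ∈ l₂, u ∈ L) →
      l₁.flatten = l₂.flatten → l₁ = l₂
  | [], [], _, _, _ => rfl
  | [], v :: _, _, h₂, hf => by
    obtain rfl : v = [] := (List.append_eq_nil_iff.mp hf.symm).1
    exact absurd (h₂ [] List.mem_cons_self) hnil
  | u :: _, [], h₁, _, hf => by
    obtain rfl : u = [] := (List.append_eq_nil_iff.mp hf).1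
    exact absurd (h₁ [] List.mem_cons_self) hnil
  | u :: l₁, v :: l₂, h₁, h₂, hf => by
    obtain ⟨rfl, hl⟩ := h.eq_of_append_eq (h₁ u List.mem_cons_self)
      (h₂ v List.mem_cons_self) hf
    rw [h.flatten_inj hnil (fun w hw => h₁ w (List.mem_cons_of_mem u hw))
      (fun w hw => h₂ w (List.mem_cons_of_mem u hw)) hl]

theorem mul (h₁ : L₁.IsPrefixFree) (h₂ : L₂.IsPrefixFree) : (L₁ * L₂).IsPrefixFree := by
  rintro _ ⟨a₁, ha₁, b₁, hb₁, rfl⟩ _ ⟨a₂, ha₂, b₂, hb₂, rfl⟩ ⟨t, ht⟩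
  rw [List.append_assoc] at ht
  obtain ⟨rfl, hb⟩ := h₁.eq_of_append_eq ha₁ ha₂ ht
  rw [h₂ b₁ hb₁ b₂ hb₂ ⟨t, hb⟩]

theorem add {p : A → Prop} (h₁ : L₁.IsPrefixFree) (h₂ : L₂.IsPrefixFree)
    (hnil₁ : [] ∉ L₁) (hnil₂ : [] ∉ L₂) (hp₁ : ∀ w ∈ L₁, ∀ x ∈ w, p x)
    (hp₂ : ∀ w ∈ L₂, ∀ x ∈ w, ¬ p x) : (L₁ + L₂).IsPrefixFree := by
  rintro u (hu | hu) v (hv | hv) huv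
  · exact h₁ u hu v hv huv
  · exact absurd huv (not_prefix_of_forall_mem (ne_of_mem_of_not_mem hu hnil₁)
      (hp₁ u hu) (hp₂ v hv))
  · exact absurd huv (not_prefix_of_forall_mem (p := fun x => ¬ p x)
      (ne_of_mem_of_not_mem hu hnil₂) (hp₂ u hu) fun x hx => not_not_intro (hp₁ v hv x hx))
  · exact h₂ u hu v hv huv

end IsPrefixFree

theorem isPrefixFree_mul_singleton {L : Language A} {c : A} (hc : ∀ u ∈ L, c ∉ u) :
    (L * {[c]}).IsPrefixFree := by
  rintro _ ⟨u, hu, _, rfl, rfl⟩ _ ⟨v, hv, _, rfl, rfl⟩ huv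
  rcases List.prefix_concat_iff.mp huv with h | h
  · exact h
  · exact absurd (h.subset (List.mem_concat_self ..)) (hc v hv)

end Language

namespace WExp

variable {M K : Type}

theorem le_indexedAux_snd (W : WExp M K) (n : ℕ) : n ≤ (W.indexedAux n).2 := by
  induction W generalizing n with
  | scalar | atom => exact Nat.le_succ n
  | add U V ihU ihV | mul U V ihU ihV => exact (ihU n).trans (ihV _)
  | star U ihU => exact ihU n

theorem index_mem_Ico_of_mem_indexedAux (W : WExp M K) (n : ℕ) :
    ∀ w ∈ (W.indexedAux n).1.matches', ∀ x ∈ w, x.2 ∈ Set.Ico n (W.indexedAux n).2 := by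
  induction W generalizing n with
  | scalar | atom =>
    rintro _ rfl x hx
    obtain rfl := List.mem_singleton.mp hx
    exact ⟨le_rfl, Nat.lt_succ_self n⟩
  | add U V ihU ihV =>
    have hU := le_indexedAux_snd U n
    have hV := le_indexedAux_snd V (U.indexedAux n).2
    rintro w (hw | hw) x hx
    · have := ihU n w hw x hx
      exact ⟨this.1, this.2.trans_le hV⟩
    · have := ihV _ w hw x hx
      exact ⟨hU.trans this.1, this.2⟩
  | mul U V ihU ihV =>
    have hU := le_indexedAux_snd U n
    have hV := le_indexedAux_snd V (U.indexedAux n).2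
    rintro _ ⟨a, ha, b, hb, rfl⟩ x hx
    rcases List.mem_append.mp hx with hx | hx
    · have := ihU n a ha x hx
      exact ⟨this.1, this.2.trans_le hV⟩
    · have := ihV _ b hb x hx
      exact ⟨hU.trans this.1, this.2⟩
  | star U ihU =>
    intro w hw x hx
    obtain ⟨l, rfl, hl⟩ := Language.mem_kstar.mp hw
    obtain ⟨y, hy, hxy⟩ := List.mem_flatten.mp hx
    exact ihU n y (hl y hy) x hxy

variable [Semiring K]

theorem nil_not_mem_marked_indexedAux (W : WExp M K) (n : ℕ) :
    [] ∉ (W.marked.indexedAux n).1.matches' := by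
  induction W generalizing n with
  | scalar | atom => exact fun h => List.cons_ne_nil _ _ h.symm
  | add U V ihU ihV => exact not_or_intro (ihU n) (ihV _)
  | mul U V ihU ihV =>
    rintro ⟨a, ha, b, -, hab⟩
    exact ihU n ((List.append_eq_nil_iff.mp hab).1 ▸ ha)
  | star U ihU =>
    rintro ⟨a, -, b, rfl, hab⟩
    exact List.concat_ne_nil _ _ hab

theorem isPrefixFree_marked_indexedAux (W : WExp M K) (n : ℕ) :
    (W.marked.indexedAux n).1.matches'.IsPrefixFree := by
  induction W generalizing n with
  | scalar | atom =>
    rintro _ rfl _ rfl _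
    rfl
  | add U V ihU ihV =>
    exact (ihU n).add (p := fun x => x.2 < (U.marked.indexedAux n).2) (ihV _)
      (nil_not_mem_marked_indexedAux U n) (nil_not_mem_marked_indexedAux V _)
      (fun w hw x hx => (index_mem_Ico_of_mem_indexedAux U.marked n w hw x hx).2)
      (fun w hw x hx => not_lt.mpr (index_mem_Ico_of_mem_indexedAux V.marked _ w hw x hx).1)
  | mul U V ihU ihV => exact (ihU n).mul (ihV _)
  | star U _ =>
    refine Language.isPrefixFree_mul_singleton fun u hu hc => ?_
    -- the marker's index is the upper bound of the indices occurring in `⌈U°⌉*`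
    exact (index_mem_Ico_of_mem_indexedAux U.marked.star n u hu _ hc).2.false

theorem unambiguous_marked_indexedAux (W : WExp M K) (n : ℕ) :
    (W.marked.indexedAux n).1.Unambiguous := by
  induction W generalizing n with
  | scalar | atom => trivial
  | add U V ihU ihV =>
    refine ⟨ihU n, ihV _, fun w ⟨hwU, hwV⟩ => ?_⟩
    exact Language.not_prefix_of_forall_mem (p := fun x => x.2 < (U.marked.indexedAux n).2)
      (ne_of_mem_of_not_mem hwU (nil_not_mem_marked_indexedAux U n))
      (fun x hx => (index_mem_Ico_of_mem_indexedAux U.marked n w hwU x hx).2)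
      (fun x hx => not_lt.mpr (index_mem_Ico_of_mem_indexedAux V.marked _ w hwV x hx).1)
      List.prefix_rfl
  | mul U V ihU ihV =>
    exact ⟨ihU n, ihV _, fun _ _ _ _ hu₁ hu₂ _ _ =>
      (isPrefixFree_marked_indexedAux U n).eq_of_append_eq hu₁ hu₂⟩
  | star U ihU =>
    refine ⟨⟨ihU n, fun _ _ => (isPrefixFree_marked_indexedAux U n).flatten_inj
      (nil_not_mem_marked_indexedAux U n)⟩, trivial, ?_⟩
    rintro u₁ _ u₂ _ - - rfl rfl heq
    exact ⟨List.append_cancel_right heq, rfl⟩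

end WExp

/-- For every `K`-expression `W` over a monoid `M`, the Kleene expression `⌈W°⌉` — the
indexed expression of the marked expression `W°` — is unambiguous. -/
theorem marked_indexed_unambiguous (M K : Type) [Semiring K] (W : WExp M K) :
    W.marked.indexed.Unambiguous :=
  W.unambiguous_marked_indexedAux 0
end

section
/- For every finite alphabet A, the free inverse monoid 𝓘(A) generated by A is pre-rational. -/
/-- The involution `†` on words over `A ∪ Ā` — here the alphabet is `A ⊕ A`, where `inl a`
stands for the letter `a` and `inr a` for its barred copy `ā` — reversing the word and
swapping barred and unbarred letters. It satisfies the inductive equations `ε† = ε`,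
`(u·a)† = ā·u†` and `(u·ā)† = a·u†`. -/
def fimDag {A : Type} (w : FreeMonoid (A ⊕ A)) : FreeMonoid (A ⊕ A) :=
  FreeMonoid.ofList (((FreeMonoid.toList w).reverse).map (Sum.elim Sum.inr Sum.inl))

/-- The defining relations of the free inverse monoid: `x` and `x†` are pseudo-inverses
(`x·x†·x = x` and `x†·x·x† = x†`), and idempotent elements commute
(`x·x†·y·y† = y·y†·x·x†`). -/
def fimRel (A : Type) : FreeMonoid (A ⊕ A) → FreeMonoid (A ⊕ A) → Prop := fun u v =>
  (∃ x, u = x * fimDag x * x ∧ v = x) ∨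
  (∃ x, u = fimDag x * x * fimDag x ∧ v = fimDag x) ∨
  (∃ x y, u = x * fimDag x * (y * fimDag y) ∧ v = y * fimDag y * (x * fimDag x))

/-- The free inverse monoid `𝓘(A)` generated by `A`: the quotient of the free monoid over
`A ∪ Ā` by the smallest monoid congruence containing the defining relations. -/
abbrev FreeInverseMonoid (A : Type) : Type := (conGen (fimRel A)).Quotient

open Pointwise

theorem Language.isRegular_setOf_map_eq_of_finite_dvd {M : Type*} [Monoid M] {B : Type}
    (μ : FreeMonoid B →* M) {m : M} (hm : {p | p ∣ m}.Finite) :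
    Language.IsRegular {w : List B | μ (FreeMonoid.ofList w) = m} := by
  set L : Language B := {w : List B | μ (FreeMonoid.ofList w) = m}
  let quotientBy : M → Language B := fun p => {v | p * μ (FreeMonoid.ofList v) = m}
  have hL (u : List B) : L.leftQuotient u = quotientBy (μ (FreeMonoid.ofList u)) := by
    ext v
    change μ (FreeMonoid.ofList (u ++ v)) = m ↔ _
    rw [FreeMonoid.ofList_append, map_mul]
    rfl
  refine Language.IsRegular.of_finite_range_leftQuotient
    (((hm.image quotientBy).insert 0).subset ?_)
  rintro _ ⟨u, rfl⟩
  rw [hL]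
  by_cases hdvd : μ (FreeMonoid.ofList u) ∣ m
  · exact Or.inr ⟨_, hdvd, rfl⟩
  · exact Or.inl (Set.eq_empty_of_forall_notMem fun v hv => hdvd ⟨_, hv.symm⟩)

theorem FreeGroup.toWord_mul_mk_singleton {α : Type*} [DecidableEq α] (g : FreeGroup α)
    (x : α × Bool) :
    (g * mk [x]).toWord = g.toWord ++ [x] ∨ g.toWord = (g * mk [x]).toWord ++ [(x.1, !x.2)] := by
  set h := g * mk [x] with hh
  by_cases hlast : x ∈ h.toWord.getLast?
  · set P := h.toWord.dropLast
    have hP : h.toWord = P ++ [x] := (List.dropLast_append_getLast? x hlast).symm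
    have hgP : g = mk P :=
      mul_right_cancel (b := mk [x]) (by rw [← hh, mul_mk, ← hP, mk_toWord])
    have hPred : IsReduced P :=
      (hP ▸ isReduced_toWord (x := h)).infix (List.prefix_append _ _).isInfix
    left
    rw [hP, hgP, toWord_mk, hPred.reduce_eq]
  · have hred : IsReduced (h.toWord ++ [(x.1, !x.2)]) := by
      refine List.isChain_append.mpr ⟨isReduced_toWord, List.isChain_singleton _, ?_⟩
      rintro ⟨a, b⟩ hy _ ⟨⟩ (rfl : a = x.1)
      have hb : b ≠ x.2 := by rintro rfl; exact hlast hy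
      exact Bool.eq_not_iff.mpr hb
    have hg : g = mk (h.toWord ++ [(x.1, !x.2)]) := by
      have hinv : mk [(x.1, !x.2)] = (mk [x])⁻¹ := by simp [inv_mk, invRev]
      rw [← mul_mk, mk_toWord, hinv, hh, mul_inv_cancel_right]
    right
    rw [hg, toWord_mk, hred.reduce_eq]

/-- A Munn bi-rooted tree, recorded by its vertex set in the Cayley graph of `G` and its terminal
vertex. The initial vertex is `1`, which `vertices` omits only for the empty word. -/
@[ext]
structure MunnTree (G : Type*) where
  vertices : Finset G
  terminal : G

namespace MunnTree

lemma finite_setOf_vertices_subset_terminal_mem {G : Type*} (V W : Finset G) :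
    {t : MunnTree G | t.vertices ⊆ V ∧ t.terminal ∈ W}.Finite := by
  refine ((V.powerset ×ˢ W).finite_toSet.image fun s => MunnTree.mk s.1 s.2).subset ?_
  rintro ⟨S, g⟩ ⟨hS, hg⟩
  exact ⟨(S, g), Finset.mem_coe.mpr (Finset.mem_product.mpr ⟨Finset.mem_powerset.mpr hS, hg⟩),
    rfl⟩

variable {G : Type*} [Group G] [DecidableEq G]

instance : Monoid (MunnTree G) where
  mul s t := ⟨s.vertices ∪ s.terminal • t.vertices, s.terminal * t.terminal⟩
  one := ⟨∅, 1⟩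
  mul_assoc s t u := by
    ext1
    · show s.vertices ∪ s.terminal • t.vertices ∪ (s.terminal * t.terminal) • u.vertices =
        s.vertices ∪ s.terminal • (t.vertices ∪ t.terminal • u.vertices)
      rw [Finset.smul_finset_union, mul_smul, Finset.union_assoc]
    · exact mul_assoc _ _ _
  one_mul s := by
    ext1
    · show ∅ ∪ (1 : G) • s.vertices = s.vertices
      rw [one_smul, Finset.empty_union]
    · exact one_mul _
  mul_one s := by
    ext1
    · show s.vertices ∪ s.terminal • ∅ = s.vertices
      rw [Finset.smul_finset_empty, Finset.union_empty]
    · exact mul_one _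

@[simp] lemma mul_vertices (s t : MunnTree G) :
    (s * t).vertices = s.vertices ∪ s.terminal • t.vertices := rfl

@[simp] lemma mul_terminal (s t : MunnTree G) : (s * t).terminal = s.terminal * t.terminal := rfl

@[simp] lemma one_vertices : (1 : MunnTree G).vertices = ∅ := rfl

@[simp] lemma one_terminal : (1 : MunnTree G).terminal = 1 := rfl

instance : StarMul (MunnTree G) where
  star s := ⟨s.terminal⁻¹ • s.vertices, s.terminal⁻¹⟩
  star_involutive s := by
    ext1
    · show s.terminal⁻¹⁻¹ • s.terminal⁻¹ • s.vertices = s.vertices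
      rw [smul_smul, inv_inv, mul_inv_cancel, one_smul]
    · exact inv_inv _
  star_mul s t := by
    ext1
    · show (s.terminal * t.terminal)⁻¹ • (s.vertices ∪ s.terminal • t.vertices) =
        t.terminal⁻¹ • t.vertices ∪ t.terminal⁻¹ • s.terminal⁻¹ • s.vertices
      rw [Finset.smul_finset_union, smul_smul, mul_inv_rev, inv_mul_cancel_right, smul_smul,
        Finset.union_comm]
    · exact mul_inv_rev _ _

@[simp] lemma star_vertices (s : MunnTree G) : (star s).vertices = s.terminal⁻¹ • s.vertices :=
  rfl

@[simp] lemma star_terminal (s : MunnTree G) : (star s).terminal = s.terminal⁻¹ := rfl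

lemma mul_star_self (s : MunnTree G) : s * star s = ⟨s.vertices, 1⟩ := by
  ext1 <;> simp [smul_smul]

lemma mul_star_mul_self (s : MunnTree G) : s * star s * s = s := by
  ext1 <;> simp [mul_star_self]

lemma commute_mul_star_self (s t : MunnTree G) : Commute (s * star s) (t * star t) := by
  ext1 <;> simp [mul_star_self, Finset.union_comm]

lemma terminal_mem_insert_one_mul {s t : MunnTree G} (hs : s.terminal ∈ insert 1 s.vertices)
    (ht : t.terminal ∈ insert 1 t.vertices) : (s * t).terminal ∈ insert 1 (s * t).vertices := by
  rw [mul_terminal, mul_vertices]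
  rcases Finset.mem_insert.mp ht with ht | ht
  · rw [ht, mul_one]
    exact Finset.insert_subset_insert _ Finset.subset_union_left hs
  · exact Finset.mem_insert_of_mem (Finset.mem_union_right _ (Finset.smul_mem_smul_finset ht))

end MunnTree

lemma fimDag_mul {A : Type} (x y : FreeMonoid (A ⊕ A)) :
    fimDag (x * y) = fimDag y * fimDag x := by
  simp [fimDag]

lemma fimDag_of {A : Type} (a : A ⊕ A) : fimDag (FreeMonoid.of a) = FreeMonoid.of a.swap := rfl

lemma fimDag_fimDag {A : Type} (x : FreeMonoid (A ⊕ A)) : fimDag (fimDag x) = x := by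
  change FreeMonoid.ofList ((x.toList.reverse.map Sum.swap).reverse.map Sum.swap) = x
  simp [List.map_reverse]

namespace FreeInverseMonoid

variable {A : Type}

def mk : FreeMonoid (A ⊕ A) →* FreeInverseMonoid A := (conGen (fimRel A)).mk'

lemma mk_surjective : Function.Surjective (mk : FreeMonoid (A ⊕ A) → FreeInverseMonoid A) :=
  Con.mk'_surjective

lemma mk_eq_mk_of_fimRel {u v : FreeMonoid (A ⊕ A)} (h : fimRel A u v) : mk u = mk v :=
  (Con.eq _).mpr (ConGen.Rel.of _ _ h)

def idem (x : FreeMonoid (A ⊕ A)) : FreeInverseMonoid A := mk x * mk (fimDag x)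

lemma idem_mul_mk (x : FreeMonoid (A ⊕ A)) : idem x * mk x = mk x := by
  simpa [idem] using mk_eq_mk_of_fimRel (Or.inl ⟨x, rfl, rfl⟩)

lemma commute_idem (x y : FreeMonoid (A ⊕ A)) : Commute (idem x) (idem y) := by
  simpa [idem, Commute, SemiconjBy, mul_assoc] using
    mk_eq_mk_of_fimRel (Or.inr (Or.inr ⟨x, y, rfl, rfl⟩))

lemma idem_mul_self (x : FreeMonoid (A ⊕ A)) : idem x * idem x = idem x := by
  conv_lhs => enter [2]; rw [idem]
  rw [← mul_assoc, idem_mul_mk, idem]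

lemma mk_mul_idem (x y : FreeMonoid (A ⊕ A)) : mk x * idem y = idem (x * y) * mk x := by
  have hx : mk x * idem (fimDag x) = mk x := by
    rw [idem, fimDag_fimDag, ← mul_assoc, ← idem, idem_mul_mk]
  calc mk x * idem y = mk x * idem (fimDag x) * idem y := by rw [hx]
    _ = mk x * idem y * idem (fimDag x) := by rw [mul_assoc, (commute_idem _ _).eq, ← mul_assoc]
    _ = idem (x * y) * mk x := by
      simp only [idem, fimDag_mul, fimDag_fimDag, map_mul, mul_assoc]

def letterEquiv : A ⊕ A ≃ A × Bool where
  toFun := Sum.elim (·, true) (·, false)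
  invFun x := cond x.2 (.inl x.1) (.inr x.1)
  left_inv y := by cases y <;> rfl
  right_inv := by rintro ⟨a, _ | _⟩ <;> rfl

lemma letterEquiv_swap (y : A ⊕ A) :
    letterEquiv y.swap = ((letterEquiv y).1, !(letterEquiv y).2) := by
  cases y <;> rfl

variable [DecidableEq A]

def munnRep : FreeMonoid (A ⊕ A) →* MunnTree (FreeGroup A) :=
  FreeMonoid.lift fun y => ⟨{1, FreeGroup.mk [letterEquiv y]}, FreeGroup.mk [letterEquiv y]⟩

lemma munnRep_of (y : A ⊕ A) : munnRep (FreeMonoid.of y) =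
    ⟨{1, FreeGroup.mk [letterEquiv y]}, FreeGroup.mk [letterEquiv y]⟩ :=
  FreeMonoid.lift_eval_of _ _

lemma munnRep_fimDag (x : FreeMonoid (A ⊕ A)) : munnRep (fimDag x) = star (munnRep x) := by
  induction x using FreeMonoid.inductionOn' with
  | one => rfl
  | of_mul y x ih =>
    have hinv : FreeGroup.mk [letterEquiv y.swap] = (FreeGroup.mk [letterEquiv y])⁻¹ := by
      simp [letterEquiv_swap, FreeGroup.inv_mk, FreeGroup.invRev]
    have hy : munnRep (FreeMonoid.of y.swap) = star (munnRep (FreeMonoid.of y)) := by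
      ext1
      · simp only [munnRep_of, MunnTree.star_vertices, hinv, Finset.smul_finset_insert,
          Finset.smul_finset_singleton, smul_eq_mul, mul_one, inv_mul_cancel]
        exact Finset.pair_comm _ _
      · simp only [munnRep_of, MunnTree.star_terminal, hinv]
    rw [fimDag_mul, fimDag_of, map_mul, map_mul, ih, hy, star_mul]

lemma conGen_le_ker_munnRep : conGen (fimRel A) ≤ Con.ker (munnRep (A := A)) := by
  refine Con.conGen_le.mpr ?_
  rintro u v (⟨x, rfl, rfl⟩ | ⟨x, rfl, rfl⟩ | ⟨x, y, rfl, rfl⟩) <;>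
    simp only [Con.ker_rel, map_mul, munnRep_fimDag]
  · exact MunnTree.mul_star_mul_self _
  · simpa using MunnTree.mul_star_mul_self (star (munnRep x))
  · exact (MunnTree.commute_mul_star_self _ _).eq

def toMunnTree : FreeInverseMonoid A →* MunnTree (FreeGroup A) :=
  (conGen (fimRel A)).lift munnRep conGen_le_ker_munnRep

lemma toMunnTree_mk (w : FreeMonoid (A ⊕ A)) : toMunnTree (mk w) = munnRep w :=
  Con.lift_mk' _ _

lemma toMunnTree_terminal_mem_insert_one (p : FreeInverseMonoid A) :
    (toMunnTree p).terminal ∈ insert 1 (toMunnTree p).vertices := by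
  obtain ⟨w, rfl⟩ := mk_surjective p
  rw [toMunnTree_mk]
  induction w using FreeMonoid.inductionOn' with
  | one => exact Finset.mem_insert_self _ _
  | of_mul y w ih =>
    rw [map_mul]
    refine MunnTree.terminal_mem_insert_one_mul ?_ ih
    simp [munnRep_of]

def reducedWord (g : FreeGroup A) : FreeMonoid (A ⊕ A) :=
  FreeMonoid.ofList (g.toWord.map letterEquiv.symm)

lemma mk_reducedWord_mul_mk_of (g : FreeGroup A) (y : A ⊕ A) :
    mk (reducedWord g) * mk (FreeMonoid.of y) =
      idem (reducedWord g) * mk (reducedWord (g * FreeGroup.mk [letterEquiv y])) := by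
  set h := g * FreeGroup.mk [letterEquiv y]
  rcases FreeGroup.toWord_mul_mk_singleton g (letterEquiv y) with hext | hcancel
  · have hw : reducedWord h = reducedWord g * FreeMonoid.of y := by
      simp [h, reducedWord, hext, FreeMonoid.ofList_append]
    rw [hw, map_mul, ← mul_assoc, idem_mul_mk]
  · have hw : reducedWord g = reducedWord h * FreeMonoid.of y.swap := by
      rw [reducedWord, hcancel, ← letterEquiv_swap]
      simp [h, reducedWord, FreeMonoid.ofList_append]
    have hswap :
        mk (FreeMonoid.of y.swap) * mk (FreeMonoid.of y) = idem (FreeMonoid.of y.swap) := by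
      rw [idem, fimDag_of, Sum.swap_swap]
    rw [hw, map_mul, mul_assoc, hswap, mk_mul_idem]

def idemProd (S : Finset (FreeGroup A)) : FreeInverseMonoid A :=
  S.noncommProd (fun g => idem (reducedWord g))
    (Set.pairwise_of_forall _ _ fun _ _ => commute_idem _ _)

lemma commute_idem_idemProd (x : FreeMonoid (A ⊕ A)) (S : Finset (FreeGroup A)) :
    Commute (idem x) (idemProd S) :=
  Finset.noncommProd_commute _ _ _ _ fun _ _ => commute_idem _ _

lemma idemProd_insert (g : FreeGroup A) (S : Finset (FreeGroup A)) :
    idemProd (insert g S) = idem (reducedWord g) * idemProd S := by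
  by_cases hg : g ∈ S
  · rw [Finset.insert_eq_of_mem hg, idemProd, ← Finset.mul_noncommProd_erase S hg, ← mul_assoc,
      idem_mul_self]
  · exact Finset.noncommProd_insert_of_notMem _ _ _ _ hg

def normalForm (t : MunnTree (FreeGroup A)) : FreeInverseMonoid A :=
  idemProd t.vertices * mk (reducedWord t.terminal)

lemma normalForm_mul_munnRep_of (t : MunnTree (FreeGroup A)) (y : A ⊕ A) :
    normalForm (t * munnRep (FreeMonoid.of y)) = normalForm t * mk (FreeMonoid.of y) := by
  set g := t.terminal
  set h := g * FreeGroup.mk [letterEquiv y]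
  have ht : t * munnRep (FreeMonoid.of y) = ⟨insert g (insert h t.vertices), h⟩ := by
    ext1
    · simp [munnRep_of, Finset.smul_finset_insert, g, h]
    · rfl
  rw [ht, normalForm, idemProd_insert, idemProd_insert, (commute_idem_idemProd _ _).eq,
    (commute_idem_idemProd _ _).left_comm, mul_assoc, mul_assoc, idem_mul_mk,
    ← mk_reducedWord_mul_mk_of, normalForm, mul_assoc]

lemma normalForm_munnRep (w : FreeMonoid (A ⊕ A)) : normalForm (munnRep w) = mk w := by
  obtain ⟨l, rfl⟩ : ∃ l, FreeMonoid.ofList l = w := ⟨w.toList, FreeMonoid.ofList_toList w⟩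
  induction l using List.reverseRecOn with
  | nil => simp [normalForm, idemProd, reducedWord]
  | append_singleton l y ih =>
    rw [FreeMonoid.ofList_append, FreeMonoid.ofList_singleton, map_mul, map_mul,
      normalForm_mul_munnRep_of, ih]

lemma normalForm_toMunnTree (p : FreeInverseMonoid A) : normalForm (toMunnTree p) = p := by
  obtain ⟨w, rfl⟩ := mk_surjective p
  rw [toMunnTree_mk, normalForm_munnRep]

omit [DecidableEq A] in
theorem finite_setOf_dvd (m : FreeInverseMonoid A) : {p | p ∣ m}.Finite := by
  classical
  let V := (toMunnTree m).vertices
  refine ((MunnTree.finite_setOf_vertices_subset_terminal_mem V (insert 1 V)).image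
    normalForm).subset ?_
  rintro p ⟨q, rfl⟩
  have hvert : (toMunnTree p).vertices ⊆ (toMunnTree (p * q)).vertices := by
    rw [map_mul, MunnTree.mul_vertices]
    exact Finset.subset_union_left
  exact ⟨toMunnTree p,
    ⟨hvert, Finset.insert_subset_insert 1 hvert (toMunnTree_terminal_mem_insert_one p)⟩,
    normalForm_toMunnTree p⟩

end FreeInverseMonoid

theorem freeInverseMonoid_isPreRational_general (A : Type) :
    IsPreRational (FreeInverseMonoid A) :=
  fun _ _ μ m =>
    Language.isRegular_setOf_map_eq_of_finite_dvd μ (FreeInverseMonoid.finite_setOf_dvd m)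

/-- For every finite alphabet `A`, the free inverse monoid `𝓘(A)` generated by `A` is
pre-rational. -/
theorem freeInverseMonoid_isPreRational (A : Type) [Fintype A] :
    IsPreRational (FreeInverseMonoid A) :=
  freeInverseMonoid_isPreRational_general A
end
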